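/- Let A be a self-adjoint operator on a Hilbert space H, c ∈ ℝ, and u ∈ B(A). Suppose either |c| > 1, or else u = F(|cA| ≥ 1) u. Then u ∈ B(cA) and ‖u‖_{B(cA)} ≤ 8 |c|^{1/2} ‖u‖_{B(A)}. Moreover, in the case |c| ≤ 1 with u = F(|cA| ≥ 1)u, the sharper bound ‖u‖_{B(cA)} ≤ 3 |c|^{1/2} ‖u‖_{B(A)} holds. -/

import Mathlib

open scoped InnerProductSpace ENNReal

noncomputable section

/-- The dyadic radii: `R_0 = 0`, `R_j = 2^(j-1)` for `j ≥ 1`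
(here indexed so that `dyadicR (k+1) = 2^k`). -/
def dyadicR : ℕ → ℝ
  | 0 => 0
  | k + 1 => 2 ^ k

/-- An abstract projection-valued (spectral) measure on `ℝ`, modelling the spectral
resolution of a self-adjoint operator `A` on a complex Hilbert space `H`:
`P S` is the spectral projection of `A` onto the Borel set `S`. -/
structure SpectralMeasure (H : Type*) [NormedAddCommGroup H] [InnerProductSpace ℂ H]
    [CompleteSpace H] where
  P : Set ℝ → H →L[ℂ] H
  inter : ∀ S T : Set ℝ, (P S).comp (P T) = P (S ∩ T)
  symm : ∀ (S : Set ℝ) (u v : H), ⟪P S u, v⟫_ℂ = ⟪u, P S v⟫_ℂ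
  empty : P ∅ = 0
  univ : P Set.univ = ContinuousLinearMap.id ℂ H
  hasSum_iUnion : ∀ S : ℕ → Set ℝ, Pairwise (Function.onFun Disjoint S) →
    ∀ u : H, HasSum (fun n => P (S n) u) (P (⋃ n, S n) u)

variable {H : Type*} [NormedAddCommGroup H] [InnerProductSpace ℂ H] [CompleteSpace H]

/-- The spectral projection `F_j(A)` onto `{R_{j-1} ≤ |A| < R_j}` (0-indexed: `band k`
corresponds to `F_{k+1}`). -/
def SpectralMeasure.band (A : SpectralMeasure H) (k : ℕ) : H →L[ℂ] H :=
  A.P {t : ℝ | dyadicR k ≤ |t| ∧ |t| < dyadicR (k + 1)}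

/-- The Besov norm `‖u‖_B = Σ_j R_j^{1/2} ‖F_j(A) u‖`, valued in `ℝ≥0∞`;
`u ∈ B(A)` precisely when this is finite. -/
def SpectralMeasure.besov (A : SpectralMeasure H) (u : H) : ℝ≥0∞ :=
  ∑' k : ℕ, ENNReal.ofReal (Real.sqrt (dyadicR (k + 1)) * ‖A.band k u‖)

/-- The Besov norm of `u` with respect to the scaled operator `cA`, whose spectral
projection onto `S` is `P {t | c·t ∈ S}`. -/
def SpectralMeasure.besovScaled (A : SpectralMeasure H) (c : ℝ) (u : H) : ℝ≥0∞ :=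
  ∑' k : ℕ, ENNReal.ofReal (Real.sqrt (dyadicR (k + 1)) *
    ‖A.P {t : ℝ | dyadicR k ≤ |c * t| ∧ |c * t| < dyadicR (k + 1)} u‖)

/-!
Write `band j = {t | R_j ≤ |t| < R_{j+1}}`, weighted by `R_{j+1}^{1/2}`, and split `u` simultaneously
along the bands of `A` and of `cA`. The piece `F(cA ∈ band k) F(A ∈ band j) u` has norm at most
`‖F(A ∈ band j) u‖` and vanishes unless the two bands meet. For `j, k ≥ 1` that forces
`|c| 2^(j-1) < 2^k < 4 |c| 2^(j-1)`, an interval holding at most two powers of two, so the weights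
over band `j` of `A` add up to at most `(2 + √2) (|c| 2^(j-1))^{1/2} ≤ 3 |c|^{1/2} R_{j+1}^{1/2}`.
When `|c| > 1`, band `0` of `A` meets only the bands `k` with `2^k < 2|c|`, whose weights form a
geometric series bounded by `(2 + √2) (2|c|)^{1/2} ≤ 8 |c|^{1/2}`. Band `0` of `cA` meets every band
of `A`: it is removed by `u = F(|cA| ≥ 1) u`, and for `|c| > 1` it only meets band `0` of `A`.
-/

def dyadicBand (j : ℕ) : Set ℝ := {t | dyadicR j ≤ |t| ∧ |t| < dyadicR (j + 1)}

lemma dyadicR_mono : Monotone dyadicR := by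
  refine monotone_nat_of_le_succ fun n => ?_
  cases n with
  | zero => norm_num [dyadicR]
  | succ m => exact pow_le_pow_right₀ one_le_two m.le_succ

lemma pairwise_disjoint_dyadicBand : Pairwise (Function.onFun Disjoint dyadicBand) := by
  refine (pairwise_disjoint_on _).2 fun i j hij => Set.disjoint_left.2 ?_
  rintro t ⟨-, hi⟩ ⟨hj, -⟩
  linarith [dyadicR_mono (Nat.succ_le_of_lt hij)]

lemma iUnion_dyadicBand : ⋃ j, dyadicBand j = Set.univ := by
  refine Set.eq_univ_of_forall fun t => Set.mem_iUnion.2 ?_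
  rcases lt_or_ge |t| 1 with ht | ht
  · exact ⟨0, by simp [dyadicR], by simpa [dyadicR] using ht⟩
  · obtain ⟨n, hn⟩ := exists_nat_pow_near ht one_lt_two
    exact ⟨n + 1, hn⟩

lemma pow_bounds_of_mem_preimage_dyadicBand_inter_succ {c t : ℝ} {k j : ℕ}
    (ht : t ∈ (c * ·) ⁻¹' dyadicBand (k + 1) ∩ dyadicBand (j + 1)) :
    |c| * 2 ^ j < 2 ^ (k + 1) ∧ (2 : ℝ) ^ (k + 1) < 4 * (|c| * 2 ^ j) := by
  obtain ⟨⟨hk, hk'⟩, hj, hj'⟩ := ht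
  simp only [dyadicR, abs_mul] at hk hk' hj hj'
  have hc : 0 < |c| := pos_of_mul_pos_left ((pow_pos two_pos k).trans_le hk) (abs_nonneg t)
  rw [pow_succ] at hj' hk' ⊢
  constructor <;> nlinarith [mul_le_mul_of_nonneg_left hj hc.le, mul_lt_mul_of_pos_left hj' hc]

lemma pow_lt_of_mem_preimage_dyadicBand_inter_zero {c t : ℝ} {k : ℕ}
    (ht : t ∈ (c * ·) ⁻¹' dyadicBand (k + 1) ∩ dyadicBand 0) :
    (2 : ℝ) ^ (k + 1) < 2 * |c| := by
  obtain ⟨⟨hk, -⟩, -, ht'⟩ := ht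
  simp only [dyadicR, abs_mul, pow_zero] at hk ht'
  have hc : 0 < |c| := pos_of_mul_pos_left ((pow_pos two_pos k).trans_le hk) (abs_nonneg t)
  rw [pow_succ]
  nlinarith [mul_lt_mul_of_pos_left ht' hc]

lemma disjoint_preimage_dyadicBand_zero (c : ℝ) :
    Disjoint ((c * ·) ⁻¹' dyadicBand 0) {t | 1 ≤ |c * t|} := by
  refine Set.disjoint_left.2 fun t ht => Set.notMem_ofPred_iff.2 (not_le.2 ?_)
  simpa [dyadicR] using ht.2

lemma preimage_dyadicBand_zero_inter_succ_eq_empty {c : ℝ} (hc : 1 < |c|) (j : ℕ) :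
    (c * ·) ⁻¹' dyadicBand 0 ∩ dyadicBand (j + 1) = ∅ := by
  refine Set.eq_empty_of_forall_notMem ?_
  rintro t ⟨⟨-, ht⟩, hj, -⟩
  simp only [dyadicR, abs_mul, pow_zero] at ht hj
  have : (1 : ℝ) ≤ 2 ^ j := one_le_pow₀ one_le_two
  nlinarith [abs_nonneg t]

lemma ENNReal.tsum_le_ofReal_mul_of_sum_le {ι : Type*} {f : ι → ℝ≥0∞} {w : ι → ℝ} {p : ι → Prop}
    {B : ℝ} (C : ℝ≥0∞) (hf : ∀ i, f i ≤ ENNReal.ofReal (w i) * C) (hp : ∀ i, f i ≠ 0 → p i)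
    (hw : ∀ i, 0 ≤ w i) (hB : ∀ s : Finset ι, (∀ i ∈ s, p i) → ∑ i ∈ s, w i ≤ B) :
    ∑' i, f i ≤ ENNReal.ofReal B * C := by
  classical
  refine ENNReal.tsum_eq_iSup_sum ▸ iSup_le fun s => ?_
  rw [← Finset.sum_filter_of_ne fun i _ => hp i]
  calc ∑ i ∈ s with p i, f i ≤ ∑ i ∈ s with p i, ENNReal.ofReal (w i) * C :=
        Finset.sum_le_sum fun i _ => hf i
    _ = ENNReal.ofReal (∑ i ∈ s with p i, w i) * C := by
        rw [← Finset.sum_mul, ENNReal.ofReal_sum_of_nonneg fun i _ => hw i]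
    _ ≤ ENNReal.ofReal B * C := by
        gcongr
        exact hB _ fun i hi => (Finset.mem_filter.1 hi).2

lemma sum_range_sqrt_two_pow_le (m : ℕ) :
    ∑ k ∈ Finset.range (m + 1), √((2 : ℝ) ^ k) ≤ (2 + √2) * √(2 ^ m) := by
  induction m with
  | zero => simpa using add_le_add one_le_two (Real.sqrt_nonneg 2)
  | succ m ih =>
    rw [Finset.sum_range_succ, pow_succ, Real.sqrt_mul (by positivity)]
    nlinarith [Real.mul_self_sqrt zero_le_two, Real.sqrt_nonneg ((2 : ℝ) ^ m)]

lemma sum_sqrt_two_pow_le_of_pow_lt {s : Finset ℕ} {D : ℝ} (hs : ∀ k ∈ s, (2 : ℝ) ^ k < D) :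
    ∑ k ∈ s, √((2 : ℝ) ^ k) ≤ (2 + √2) * √D := by
  rcases s.eq_empty_or_nonempty with rfl | hne
  · simp only [Finset.sum_empty]
    positivity
  calc ∑ k ∈ s, √((2 : ℝ) ^ k) ≤ ∑ k ∈ Finset.range (s.max' hne + 1), √((2 : ℝ) ^ k) :=
        Finset.sum_le_sum_of_subset_of_nonneg
          (fun k hk => Finset.mem_range_succ_iff.2 (s.le_max' k hk)) fun _ _ _ => by positivity
    _ ≤ (2 + √2) * √(2 ^ s.max' hne) := sum_range_sqrt_two_pow_le _
    _ ≤ (2 + √2) * √D := by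
        gcongr
        exact (hs _ (s.max'_mem hne)).le

-- An interval `(x, 2x]` contains at most one power of two.
lemma sum_sqrt_two_pow_le_of_mem_Ioc {s : Finset ℕ} {x : ℝ}
    (hs : ∀ k ∈ s, x < 2 ^ k ∧ (2 : ℝ) ^ k ≤ 2 * x) :
    ∑ k ∈ s, √((2 : ℝ) ^ k) ≤ √(2 * x) := by
  have hcard : s.card ≤ 1 := by
    refine Finset.card_le_one.2 fun a ha b hb => ?_
    by_contra hab
    wlog hlt : a < b generalizing a b
    · exact this b hb a ha (Ne.symm hab) ((not_lt.1 hlt).lt_of_ne (Ne.symm hab))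
    have : (2 : ℝ) ^ (a + 1) ≤ 2 ^ b := pow_le_pow_right₀ one_le_two hlt
    rw [pow_succ] at this
    linarith [(hs a ha).1, (hs b hb).2]
  calc ∑ k ∈ s, √((2 : ℝ) ^ k) ≤ s.card • √(2 * x) :=
        Finset.sum_le_card_nsmul _ _ _ fun k hk => Real.sqrt_le_sqrt (hs k hk).2
    _ ≤ 1 • √(2 * x) := by gcongr
    _ = √(2 * x) := one_nsmul _

lemma sum_sqrt_two_pow_le_of_mem_Ioo {s : Finset ℕ} {L : ℝ}
    (hs : ∀ k ∈ s, L < 2 ^ k ∧ (2 : ℝ) ^ k < 4 * L) :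
    ∑ k ∈ s, √((2 : ℝ) ^ k) ≤ (2 + √2) * √L := by
  rw [← Finset.sum_filter_add_sum_filter_not s fun k => (2 : ℝ) ^ k ≤ 2 * L]
  have hlow := sum_sqrt_two_pow_le_of_mem_Ioc (s := s.filter fun k => (2 : ℝ) ^ k ≤ 2 * L) (x := L)
    fun k hk => by
      rw [Finset.mem_filter] at hk
      exact ⟨(hs k hk.1).1, hk.2⟩
  have hhigh := sum_sqrt_two_pow_le_of_mem_Ioc
    (s := s.filter fun k => ¬(2 : ℝ) ^ k ≤ 2 * L) (x := 2 * L) fun k hk => by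
      rw [Finset.mem_filter, not_le] at hk
      exact ⟨hk.2, by linarith [(hs k hk.1).2]⟩
  have h4 : √(2 * (2 * L)) = 2 * √L := by
    rw [← mul_assoc, Real.sqrt_mul (by norm_num), show (2 : ℝ) * 2 = 2 ^ 2 by norm_num,
      Real.sqrt_sq (by norm_num)]
  rw [Real.sqrt_mul (by norm_num)] at hlow
  linarith

namespace SpectralMeasure

variable (A : SpectralMeasure H)

lemma P_inter_apply (S T : Set ℝ) (u : H) : A.P (S ∩ T) u = A.P S (A.P T u) := by
  rw [← A.inter]
  rfl

lemma P_empty_apply (u : H) : A.P ∅ u = 0 := by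
  rw [A.empty]
  rfl

lemma norm_P_apply_le (S : Set ℝ) (u : H) : ‖A.P S u‖ ≤ ‖u‖ := by
  have h : ‖A.P S u‖ ^ 2 ≤ ‖u‖ * ‖A.P S u‖ :=
    calc ‖A.P S u‖ ^ 2 = RCLike.re ⟪A.P S u, A.P S u⟫_ℂ := (inner_self_eq_norm_sq _).symm
      _ = RCLike.re ⟪u, A.P S u⟫_ℂ := by rw [A.symm, ← A.P_inter_apply, Set.inter_self]
      _ ≤ ‖u‖ * ‖A.P S u‖ := (RCLike.re_le_norm _).trans (norm_inner_le_norm _ _)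
  nlinarith [norm_nonneg u, norm_nonneg (A.P S u)]

lemma norm_P_inter_apply_le (S T : Set ℝ) (u : H) : ‖A.P (S ∩ T) u‖ ≤ ‖A.P T u‖ := by
  rw [A.P_inter_apply]
  exact A.norm_P_apply_le _ _

lemma P_apply_eq_zero_of_disjoint {S T : Set ℝ} {u : H} (hST : Disjoint S T)
    (hu : A.P T u = u) : A.P S u = 0 := by
  rw [← hu, ← A.P_inter_apply, hST.inter_eq, P_empty_apply]

lemma nonempty_of_P_apply_ne_zero {S : Set ℝ} {u : H} (h : A.P S u ≠ 0) : S.Nonempty := by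
  rw [Set.nonempty_iff_ne_empty]
  rintro rfl
  exact h (A.P_empty_apply u)

lemma hasSum_P_inter_dyadicBand_apply (S : Set ℝ) (u : H) :
    HasSum (fun j => A.P (S ∩ dyadicBand j) u) (A.P S u) := by
  have hd : Pairwise (Function.onFun Disjoint fun j => S ∩ dyadicBand j) := fun i j hij =>
    (pairwise_disjoint_dyadicBand hij).mono Set.inter_subset_right Set.inter_subset_right
  simpa [← Set.inter_iUnion, iUnion_dyadicBand] using A.hasSum_iUnion _ hd u

lemma ofReal_mul_norm_P_apply_le_tsum {a : ℝ} (ha : 0 ≤ a) (S : Set ℝ) (u : H) :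
    ENNReal.ofReal (a * ‖A.P S u‖) ≤
      ∑' j, ENNReal.ofReal (a * ‖A.P (S ∩ dyadicBand j) u‖) := by
  simp only [ENNReal.ofReal_mul ha, ofReal_norm, ENNReal.tsum_mul_left]
  gcongr
  exact (A.hasSum_P_inter_dyadicBand_apply S u).enorm_le_of_bounded
    ENNReal.summable.hasSum fun _ => le_rfl

/-- `R_{k+1}^{1/2} ‖F(R_k ≤ |cA| < R_{k+1}) F(R_j ≤ |A| < R_{j+1}) u‖`. -/
def crossTerm (c : ℝ) (u : H) (j k : ℕ) : ℝ≥0∞ :=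
  ENNReal.ofReal (√(dyadicR (k + 1)) * ‖A.P ((c * ·) ⁻¹' dyadicBand k ∩ dyadicBand j) u‖)

variable {A} {c : ℝ} {u : H}

lemma crossTerm_le (j k : ℕ) :
    A.crossTerm c u j k ≤ ENNReal.ofReal √((2 : ℝ) ^ k) * ENNReal.ofReal ‖A.band j u‖ := by
  rw [crossTerm, ← ENNReal.ofReal_mul (Real.sqrt_nonneg _)]
  exact ENNReal.ofReal_le_ofReal
    (mul_le_mul_of_nonneg_left (A.norm_P_inter_apply_le _ _ u) (Real.sqrt_nonneg _))

lemma P_apply_ne_zero_of_crossTerm_ne_zero {j k : ℕ} (h : A.crossTerm c u j k ≠ 0) :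
    A.P ((c * ·) ⁻¹' dyadicBand k ∩ dyadicBand j) u ≠ 0 := by
  rintro h0
  simp [crossTerm, h0] at h

lemma besovScaled_le_of_forall_band {C : ℝ≥0∞}
    (h : ∀ j, ∑' k, A.crossTerm c u j k ≤
      C * ENNReal.ofReal (√(dyadicR (j + 1)) * ‖A.band j u‖)) :
    A.besovScaled c u ≤ C * A.besov u :=
  calc A.besovScaled c u
      = ∑' k, ENNReal.ofReal (√(dyadicR (k + 1)) * ‖A.P ((c * ·) ⁻¹' dyadicBand k) u‖) := rfl
    _ ≤ ∑' k, ∑' j, A.crossTerm c u j k :=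
        ENNReal.tsum_le_tsum fun _ => A.ofReal_mul_norm_P_apply_le_tsum (Real.sqrt_nonneg _) _ u
    _ = ∑' j, ∑' k, A.crossTerm c u j k := ENNReal.tsum_comm
    _ ≤ ∑' j, C * ENNReal.ofReal (√(dyadicR (j + 1)) * ‖A.band j u‖) := ENNReal.tsum_le_tsum h
    _ = C * A.besov u := ENNReal.tsum_mul_left

lemma tsum_crossTerm_succ_le (j : ℕ)
    (h0 : A.P ((c * ·) ⁻¹' dyadicBand 0 ∩ dyadicBand (j + 1)) u = 0) :
    ∑' k, A.crossTerm c u (j + 1) k ≤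
      ENNReal.ofReal (3 * √|c|) * ENNReal.ofReal (√(dyadicR (j + 2)) * ‖A.band (j + 1) u‖) := by
  have hsupp : ∀ k, A.crossTerm c u (j + 1) k ≠ 0 →
      |c| * 2 ^ j < 2 ^ k ∧ (2 : ℝ) ^ k < 4 * (|c| * 2 ^ j) := by
    rintro (_ | k) hk
    · exact absurd h0 (P_apply_ne_zero_of_crossTerm_ne_zero hk)
    · obtain ⟨t, ht⟩ := A.nonempty_of_P_apply_ne_zero (P_apply_ne_zero_of_crossTerm_ne_zero hk)
      exact pow_bounds_of_mem_preimage_dyadicBand_inter_succ ht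
  calc ∑' k, A.crossTerm c u (j + 1) k
      ≤ ENNReal.ofReal ((2 + √2) * √(|c| * 2 ^ j)) * ENNReal.ofReal ‖A.band (j + 1) u‖ :=
        ENNReal.tsum_le_ofReal_mul_of_sum_le _ (crossTerm_le _) hsupp (fun _ => Real.sqrt_nonneg _)
          fun _ hs => sum_sqrt_two_pow_le_of_mem_Ioo hs
    _ ≤ ENNReal.ofReal (3 * √|c| * √(dyadicR (j + 2))) * ENNReal.ofReal ‖A.band (j + 1) u‖ := by
        gcongr ENNReal.ofReal ?_ * _
        rw [Real.sqrt_mul (abs_nonneg c), dyadicR, pow_succ, Real.sqrt_mul (by positivity)]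
        have : 0 ≤ √|c| * √(2 ^ j) := by positivity
        nlinarith [Real.one_lt_sqrt_two]
    _ = ENNReal.ofReal (3 * √|c|) * ENNReal.ofReal (√(dyadicR (j + 2)) * ‖A.band (j + 1) u‖) := by
        rw [ENNReal.ofReal_mul (by positivity), ENNReal.ofReal_mul (Real.sqrt_nonneg _), mul_assoc]

lemma tsum_crossTerm_zero_le (hc : 1 < |c|) :
    ∑' k, A.crossTerm c u 0 k ≤
      ENNReal.ofReal (8 * √|c|) * ENNReal.ofReal (√(dyadicR 1) * ‖A.band 0 u‖) := by
  have hsupp : ∀ k, A.crossTerm c u 0 k ≠ 0 → (2 : ℝ) ^ k < 2 * |c| := by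
    rintro (_ | k) hk
    · linarith
    · obtain ⟨t, ht⟩ := A.nonempty_of_P_apply_ne_zero (P_apply_ne_zero_of_crossTerm_ne_zero hk)
      exact pow_lt_of_mem_preimage_dyadicBand_inter_zero ht
  calc ∑' k, A.crossTerm c u 0 k
      ≤ ENNReal.ofReal ((2 + √2) * √(2 * |c|)) * ENNReal.ofReal ‖A.band 0 u‖ :=
        ENNReal.tsum_le_ofReal_mul_of_sum_le _ (crossTerm_le _) hsupp (fun _ => Real.sqrt_nonneg _)
          fun _ hs => sum_sqrt_two_pow_le_of_pow_lt hs
    _ ≤ ENNReal.ofReal (8 * √|c|) * ENNReal.ofReal ‖A.band 0 u‖ := by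
        gcongr ENNReal.ofReal ?_ * _
        calc (2 + √2) * √(2 * |c|) = (2 * √2 + √2 * √2) * √|c| := by
              rw [Real.sqrt_mul zero_le_two]
              ring
          _ ≤ 8 * √|c| := by
              rw [Real.mul_self_sqrt zero_le_two]
              gcongr
              linarith [Real.sqrt_two_lt_three_halves]
    _ = ENNReal.ofReal (8 * √|c|) * ENNReal.ofReal (√(dyadicR 1) * ‖A.band 0 u‖) := by
        rw [show dyadicR 1 = 1 from pow_zero 2, Real.sqrt_one, one_mul]

lemma tsum_crossTerm_zero_eq_zero (hc : |c| ≤ 1)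
    (h0 : A.P ((c * ·) ⁻¹' dyadicBand 0 ∩ dyadicBand 0) u = 0) :
    ∑' k, A.crossTerm c u 0 k = 0 := by
  refine ENNReal.tsum_eq_zero.2 fun k => ?_
  by_contra hk
  rcases k with _ | k
  · exact P_apply_ne_zero_of_crossTerm_ne_zero hk h0
  · obtain ⟨t, ht⟩ := A.nonempty_of_P_apply_ne_zero (P_apply_ne_zero_of_crossTerm_ne_zero hk)
    have hlt := pow_lt_of_mem_preimage_dyadicBand_inter_zero ht
    have hge : (2 : ℝ) ≤ 2 ^ (k + 1) := le_self_pow₀ one_le_two k.succ_ne_zero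
    linarith

end SpectralMeasure

/-- if `u ∈ B(A)` and either `|c| > 1` or `u = F(|cA| ≥ 1)u`, then
`u ∈ B(cA)` with `‖u‖_{B(cA)} ≤ 8 |c|^{1/2} ‖u‖_{B(A)}`; moreover in the case
`|c| ≤ 1` (with `u = F(|cA| ≥ 1)u`) one has the sharper bound with constant `3 |c|^{1/2}`. -/
theorem stmt5 (A : SpectralMeasure H) (c : ℝ) (u : H)
    (hu : A.besov u ≠ ⊤)
    (h : 1 < |c| ∨ A.P {t : ℝ | 1 ≤ |c * t|} u = u) :
    A.besovScaled c u ≠ ⊤ ∧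
    A.besovScaled c u ≤ ENNReal.ofReal (8 * Real.sqrt |c|) * A.besov u ∧
    (|c| ≤ 1 → A.besovScaled c u ≤ ENNReal.ofReal (3 * Real.sqrt |c|) * A.besov u) := by
  have h3 : |c| ≤ 1 → A.besovScaled c u ≤ ENNReal.ofReal (3 * √|c|) * A.besov u := by
    intro hc
    have h0 (T : Set ℝ) : A.P ((c * ·) ⁻¹' dyadicBand 0 ∩ T) u = 0 :=
      A.P_apply_eq_zero_of_disjoint
        ((disjoint_preimage_dyadicBand_zero c).mono_left Set.inter_subset_left)
        (h.resolve_left (not_lt.2 hc))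
    refine SpectralMeasure.besovScaled_le_of_forall_band fun j => ?_
    rcases j with _ | j
    · rw [SpectralMeasure.tsum_crossTerm_zero_eq_zero hc (h0 _)]
      exact zero_le
    · exact SpectralMeasure.tsum_crossTerm_succ_le j (h0 _)
  have h8 : A.besovScaled c u ≤ ENNReal.ofReal (8 * √|c|) * A.besov u := by
    rcases le_or_gt |c| 1 with hc | hc
    · exact (h3 hc).trans (by gcongr; norm_num)
    refine SpectralMeasure.besovScaled_le_of_forall_band fun j => ?_
    rcases j with _ | j
    · exact SpectralMeasure.tsum_crossTerm_zero_le hc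
    · refine (SpectralMeasure.tsum_crossTerm_succ_le j ?_).trans (by gcongr; norm_num)
      rw [preimage_dyadicBand_zero_inter_succ_eq_empty hc, A.P_empty_apply]
  exact ⟨ne_top_of_le_ne_top (ENNReal.mul_ne_top ENNReal.ofReal_ne_top hu) h8, h8, h3⟩
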